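/- Let (π̂_{p,q}), indexed by pairs of rationals p ≤ q, be a family of partitions of ℕ such that: (i) π̂_{p,r} = Coag(π̂_{q,r}, π̂_{p,q}) for all rationals p < q < r; and (ii) for every real s and every n ∈ ℕ there exists ε > 0 such that π̂^{[n]}_{p,q} = O_[n] for all rationals p ≤ q lying in [s, s+ε), and π̂^{[n]}_{p,q} = O_[n] for all rationals p ≤ q lying in (s−ε, s). Then there exists a deterministic flow of partitions (π̃_{s,t})_{s≤t, s,t∈ℝ} (in particular satisfying π̃_{r,t} = Coag(π̃_{s,t}, π̃_{r,s}) for ALL reals r < s < t and π̃_{s,s} = O_[∞] for all s) such that π̃_{p,q} = π̂_{p,q} for all rationals p < q. -/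
import Mathlib


/-!  Partitions of `ℕ` as equivalence relations (setoids), blocks ordered by
their least element (0-indexed), and the coagulation operator. -/

/-- The least element of the block of `a` in the partition `π` of `ℕ`. -/
noncomputable def leaderOf (π : Setoid ℕ) (a : ℕ) : ℕ := sInf {k | π.r a k}

/-- The (0-based) index of the block of `a` among the blocks of `π`, the blocks
being ordered by increasing least element. -/
noncomputable def blockIdx (π : Setoid ℕ) (a : ℕ) : ℕ :=
  Set.ncard {l | l < leaderOf π a ∧ leaderOf π l = l}

/-- The `i`-th block (0-based) of the partition `π`; it is empty when `π` has
fewer than `i + 1` blocks. -/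
def block (π : Setoid ℕ) (i : ℕ) : Set ℕ := {a | blockIdx π a = i}

/-- The coagulation `Coag π σ` of the partitions `π` and `σ` : two integers are
related iff the indices of their `π`-blocks lie in a common block of `σ`;
equivalently, the `i`-th block of `Coag π σ` is `⋃_{j ∈ σ(i)} π(j)`. -/
noncomputable def Coag (π σ : Setoid ℕ) : Setoid ℕ := Setoid.comap (blockIdx π) σ

/-- The partition `O_[∞]` of `ℕ` into singletons. -/
def eqSetoid : Setoid ℕ := ⟨Eq, ⟨fun _ => rfl, fun h => h.symm, fun h₁ h₂ => h₁.trans h₂⟩⟩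

/-- `restTrivial π n` says that the restriction `π^{[n]}` of `π` to the first
`n` integers is the partition `O_[n]` into singletons. -/
def restTrivial (π : Setoid ℕ) (n : ℕ) : Prop := ∀ i < n, ∀ j < n, π.r i j → i = j

/-- A deterministic flow of partitions `(π̂_{s,t})_{s ≤ t}`. -/
structure IsDetFlow (π : ∀ s t : ℝ, s ≤ t → Setoid ℕ) : Prop where
  /-- cocycle property -/
  cocycle : ∀ (r s t : ℝ) (h₁ : r < s) (h₂ : s < t),
    π r t (h₁.le.trans h₂.le) = Coag (π s t h₂.le) (π r s h₁.le)
  /-- `π̂_{s,s} = O_[∞]` -/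
  diag : ∀ s : ℝ, π s s le_rfl = eqSetoid
  /-- right regularity -/
  right_reg : ∀ (s : ℝ) (n : ℕ), ∃ ε > 0, ∀ (t : ℝ) (h : s ≤ t), t < s + ε →
    restTrivial (π s t h) n
  /-- left regularity -/
  left_reg : ∀ (s : ℝ) (n : ℕ), ∃ ε > 0, ∀ r : ℝ, s - ε < r → r < s →
    ∃ δ > 0, δ < s - r ∧ ∀ (t : ℝ) (h : r ≤ t), s - δ < t → t < s → restTrivial (π r t h) n

/-! ### Basic lemmas about `leaderOf` and `blockIdx` -/

lemma r_leaderOf (π : Setoid ℕ) (a : ℕ) : π.r a (leaderOf π a) :=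
  Nat.sInf_mem ⟨a, π.refl a⟩

lemma leaderOf_le (π : Setoid ℕ) (a : ℕ) : leaderOf π a ≤ a :=
  Nat.sInf_le (π.refl a)

lemma leaderOf_eq_of_r {π : Setoid ℕ} {a b : ℕ} (h : π.r a b) :
    leaderOf π a = leaderOf π b := by
  unfold leaderOf
  congr 1
  ext k
  exact ⟨fun hk => π.trans (π.symm h) hk, fun hk => π.trans h hk⟩

lemma leaderOf_leaderOf (π : Setoid ℕ) (a : ℕ) :
    leaderOf π (leaderOf π a) = leaderOf π a :=
  (leaderOf_eq_of_r (r_leaderOf π a)).symm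

lemma leaders_finite (π : Setoid ℕ) (a : ℕ) :
    {l | l < leaderOf π a ∧ leaderOf π l = l}.Finite :=
  (Set.finite_Iio _).subset fun _ hl => hl.1

lemma ncard_Iio (n : ℕ) : (Set.Iio n).ncard = n := by
  rw [← Finset.coe_range, Set.ncard_coe_finset, Finset.card_range]

lemma blockIdx_le (π : Setoid ℕ) (a : ℕ) : blockIdx π a ≤ a := by
  have h1 : blockIdx π a ≤ (Set.Iio (leaderOf π a)).ncard :=
    Set.ncard_le_ncard (fun _ hl => hl.1) (Set.finite_Iio _)
  rw [ncard_Iio] at h1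
  exact h1.trans (leaderOf_le π a)

lemma blockIdx_lt {π : Setoid ℕ} {a b : ℕ} (h : leaderOf π a < leaderOf π b) :
    blockIdx π a < blockIdx π b := by
  apply Set.ncard_lt_ncard _ (leaders_finite π b)
  constructor
  · exact fun l hl => ⟨hl.1.trans h, hl.2⟩
  · intro hsub
    exact absurd (hsub ⟨h, leaderOf_leaderOf π a⟩).1 (lt_irrefl _)

lemma blockIdx_eq_iff {π : Setoid ℕ} {a b : ℕ} :
    blockIdx π a = blockIdx π b ↔ π.r a b := by
  constructor
  · intro h
    rcases lt_trichotomy (leaderOf π a) (leaderOf π b) with hlt | heq | hgt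
    · exact absurd h (blockIdx_lt hlt).ne
    · refine π.trans (r_leaderOf π a) ?_
      rw [heq]
      exact π.symm (r_leaderOf π b)
    · exact absurd h.symm (blockIdx_lt hgt).ne
  · intro h
    unfold blockIdx
    rw [leaderOf_eq_of_r h]

lemma leaderOf_of_restTrivial {π : Setoid ℕ} {n : ℕ} (ht : restTrivial π n)
    {a : ℕ} (ha : a < n) : leaderOf π a = a := by
  rcases lt_or_eq_of_le (leaderOf_le π a) with hlt | he
  · have := ht a ha (leaderOf π a) (hlt.trans ha) (r_leaderOf π a)
    omega
  · exact he

lemma blockIdx_of_restTrivial {π : Setoid ℕ} {n : ℕ} (ht : restTrivial π n)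
    {a : ℕ} (ha : a < n) : blockIdx π a = a := by
  unfold blockIdx
  rw [leaderOf_of_restTrivial ht ha]
  have hset : {l | l < a ∧ leaderOf π l = l} = Set.Iio a := by
    ext l
    simp only [Set.mem_setOf_eq, Set.mem_Iio]
    exact ⟨fun h => h.1, fun hl => ⟨hl, leaderOf_of_restTrivial ht (hl.trans ha)⟩⟩
  rw [hset, ncard_Iio]

/-! ### Agreement of partitions on an initial segment -/

def AgreeOn (π π' : Setoid ℕ) (n : ℕ) : Prop :=
  ∀ i j, i < n → j < n → (π.r i j ↔ π'.r i j)

lemma AgreeOn.symm {π π' : Setoid ℕ} {n : ℕ} (h : AgreeOn π π' n) : AgreeOn π' π n :=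
  fun i j hi hj => (h i j hi hj).symm

lemma AgreeOn.trans {π π' π'' : Setoid ℕ} {n : ℕ} (h : AgreeOn π π' n)
    (h' : AgreeOn π' π'' n) : AgreeOn π π'' n :=
  fun i j hi hj => (h i j hi hj).trans (h' i j hi hj)

lemma leaderOf_congr {π π' : Setoid ℕ} {n a : ℕ} (h : AgreeOn π π' n) (ha : a < n) :
    leaderOf π a = leaderOf π' a := by
  apply le_antisymm
  · exact Nat.sInf_le ((h a (leaderOf π' a) ha ((leaderOf_le π' a).trans_lt ha)).mpr
      (r_leaderOf π' a))
  · exact Nat.sInf_le ((h a (leaderOf π a) ha ((leaderOf_le π a).trans_lt ha)).mp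
      (r_leaderOf π a))

lemma blockIdx_congr {π π' : Setoid ℕ} {n a : ℕ} (h : AgreeOn π π' n) (ha : a < n) :
    blockIdx π a = blockIdx π' a := by
  unfold blockIdx
  rw [leaderOf_congr h ha]
  congr 1
  ext l
  simp only [Set.mem_setOf_eq]
  refine and_congr_right fun hl => ?_
  have hln : l < n := (hl.trans_le ((leaderOf_le π' a).trans ha.le)).trans_le le_rfl
  rw [leaderOf_congr h hln]

/-! ### Coagulation lemmas -/

lemma Coag_rel (π σ : Setoid ℕ) (a b : ℕ) :
    (Coag π σ).r a b ↔ σ.r (blockIdx π a) (blockIdx π b) := Iff.rfl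

lemma Coag_rel_triv_right {π σ : Setoid ℕ} {n i j : ℕ} (ht : restTrivial σ n)
    (hi : i < n) (hj : j < n) : ((Coag π σ).r i j ↔ π.r i j) := by
  rw [Coag_rel]
  constructor
  · intro h
    exact blockIdx_eq_iff.mp
      (ht _ ((blockIdx_le π i).trans_lt hi) _ ((blockIdx_le π j).trans_lt hj) h)
  · intro h
    rw [blockIdx_eq_iff.mpr h]

lemma Coag_rel_triv_left {π σ : Setoid ℕ} {n i j : ℕ} (ht : restTrivial π n)
    (hi : i < n) (hj : j < n) : ((Coag π σ).r i j ↔ σ.r i j) := by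
  rw [Coag_rel, blockIdx_of_restTrivial ht hi, blockIdx_of_restTrivial ht hj]

/-! ### Extension of a rationally-indexed flow -/

section Flow

variable (π : ∀ p q : ℚ, p ≤ q → Setoid ℕ)

/-- Cocycle hypothesis on rationals. -/
def Hcoc : Prop :=
  ∀ (p q r : ℚ) (h₁ : p < q) (h₂ : q < r),
    π p r (h₁.le.trans h₂.le) = Coag (π q r h₂.le) (π p q h₁.le)

/-- Regularity hypothesis. -/
def Hreg : Prop :=
  ∀ (s : ℝ) (n : ℕ), ∃ ε > 0,
    (∀ (p q : ℚ) (h : p ≤ q), s ≤ (p : ℝ) → (q : ℝ) < s + ε → restTrivial (π p q h) n) ∧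
    (∀ (p q : ℚ) (h : p ≤ q), s - ε < (p : ℝ) → (q : ℝ) < s → restTrivial (π p q h) n)

/-- `good π s n x` : `x` is a rational at or just after the real time `s`, such
that all the partitions indexed by rationals between `s` and `x` are trivial on
`[n]`. -/
def good (s : ℝ) (n : ℕ) (x : ℚ) : Prop :=
  s ≤ (x : ℝ) ∧ ∀ (p q : ℚ) (h : p ≤ q), s ≤ (p : ℝ) → (q : ℝ) ≤ (x : ℝ) →
    restTrivial (π p q h) n

/-- The extended relation at real times `s < t`. -/
def FRel (s t : ℝ) (a b : ℕ) : Prop :=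
  ∃ (p q : ℚ) (hpq : p ≤ q), good π s (max a b + 1) p ∧ (p : ℝ) < t ∧
    good π t (max a b + 1) q ∧ (π p q hpq).r a b

lemma good_mono {s : ℝ} {n m : ℕ} {x : ℚ} (h : good π s n x) (hmn : m ≤ n) :
    good π s m x :=
  ⟨h.1, fun p q hpq h1 h2 i hi j hj hr =>
    h.2 p q hpq h1 h2 i (hi.trans_le hmn) j (hj.trans_le hmn) hr⟩

lemma good_exists (hreg : Hreg π) (s : ℝ) (n : ℕ) {u : ℝ} (hu : s < u) :
    ∃ x : ℚ, good π s n x ∧ (x : ℝ) < u := by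
  obtain ⟨ε, hε, hr, -⟩ := hreg s n
  obtain ⟨x, hx1, hx2⟩ := exists_rat_btwn (lt_min (by linarith : s < s + ε) hu)
  have hxε : (x : ℝ) < s + ε := hx2.trans_le (min_le_left _ _)
  exact ⟨x, ⟨hx1.le, fun p q hpq h1 h2 => hr p q hpq h1 (h2.trans_lt hxε)⟩,
    hx2.trans_le (min_le_right _ _)⟩

lemma good_self (hreg : Hreg π) (x : ℚ) (n : ℕ) : good π (x : ℝ) n x := by
  obtain ⟨ε, hε, hr, -⟩ := hreg (x : ℝ) n
  exact ⟨le_refl _, fun p q hpq h1 h2 => hr p q hpq h1 (by linarith)⟩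

lemma good_triv_between {s : ℝ} {n : ℕ} {x y : ℚ} (hx : good π s n x)
    (hy : good π s n y) (hxy : x ≤ y) : restTrivial (π x y hxy) n :=
  hy.2 x y hxy hx.1 le_rfl

lemma agree_left (hcoc : Hcoc π) {p p' q : ℚ} (h1 : p ≤ p') (h2 : p' < q) {n : ℕ}
    (ht : restTrivial (π p p' h1) n) :
    AgreeOn (π p q (h1.trans h2.le)) (π p' q h2.le) n := by
  rcases eq_or_lt_of_le h1 with rfl | hlt
  · exact fun i j _ _ => Iff.rfl
  · intro i j hi hj
    rw [hcoc p p' q hlt h2]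
    exact Coag_rel_triv_right ht hi hj

lemma agree_right (hcoc : Hcoc π) {p q q' : ℚ} (h0 : p < q) (h1 : q ≤ q') {n : ℕ}
    (ht : restTrivial (π q q' h1) n) :
    AgreeOn (π p q h0.le) (π p q' (h0.le.trans h1)) n := by
  rcases eq_or_lt_of_le h1 with rfl | hlt
  · exact fun i j _ _ => Iff.rfl
  · intro i j hi hj
    rw [hcoc p q q' h0 hlt]
    exact (Coag_rel_triv_left ht hi hj).symm

lemma consistAux (hcoc : Hcoc π) {s t : ℝ} {n : ℕ} {p q p' q' : ℚ}
    (hpq : p ≤ q) (hp'q' : p' ≤ q')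
    (hgp : good π s n p) (hpt : (p : ℝ) < t) (hgq : good π t n q)
    (hgp' : good π s n p') (hp't : (p' : ℝ) < t) (hgq' : good π t n q')
    (hpp' : p ≤ p') :
    AgreeOn (π p q hpq) (π p' q' hp'q') n := by
  have hp'q : p' < q := by exact_mod_cast hp't.trans_le hgq.1
  have step1 : AgreeOn (π p q (hpp'.trans hp'q.le)) (π p' q hp'q.le) n :=
    agree_left π hcoc hpp' hp'q (good_triv_between π hgp hgp' hpp')
  have hp'q'' : p' < q' := by exact_mod_cast hp't.trans_le hgq'.1
  rcases le_total q q' with hqq' | hq'q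
  · exact step1.trans (agree_right π hcoc hp'q hqq' (good_triv_between π hgq hgq' hqq'))
  · exact step1.trans
      (agree_right π hcoc hp'q'' hq'q (good_triv_between π hgq' hgq hq'q)).symm

lemma consist (hcoc : Hcoc π) {s t : ℝ} {n : ℕ} {p q p' q' : ℚ}
    (hpq : p ≤ q) (hp'q' : p' ≤ q')
    (hgp : good π s n p) (hpt : (p : ℝ) < t) (hgq : good π t n q)
    (hgp' : good π s n p') (hp't : (p' : ℝ) < t) (hgq' : good π t n q') :
    AgreeOn (π p q hpq) (π p' q' hp'q') n := by
  rcases le_total p p' with h | h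
  · exact consistAux π hcoc hpq hp'q' hgp hpt hgq hgp' hp't hgq' h
  · exact (consistAux π hcoc hp'q' hpq hgp' hp't hgq' hgp hpt hgq h).symm

lemma FRel_iff (hcoc : Hcoc π) {s t : ℝ} {a b : ℕ} {p q : ℚ} (hpq : p ≤ q)
    (hgp : good π s (max a b + 1) p) (hpt : (p : ℝ) < t)
    (hgq : good π t (max a b + 1) q) :
    FRel π s t a b ↔ (π p q hpq).r a b := by
  constructor
  · rintro ⟨p₁, q₁, h₁, hg1, hp1t, hg2, hr⟩
    exact (consist π hcoc h₁ hpq hg1 hp1t hg2 hgp hpt hgq a b (by omega) (by omega)).mp hr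
  · intro h
    exact ⟨p, q, hpq, hgp, hpt, hgq, h⟩

lemma good_pair_exists (hreg : Hreg π) {s t : ℝ} (hst : s < t) (n : ℕ) :
    ∃ (p q : ℚ) (hpq : p ≤ q), good π s n p ∧ (p : ℝ) < t ∧ good π t n q := by
  obtain ⟨p, hgp, hpt⟩ := good_exists π hreg s n hst
  obtain ⟨q, hgq, -⟩ := good_exists π hreg t n (lt_add_one t)
  have hpq : (p : ℝ) < q := hpt.trans_le hgq.1
  exact ⟨p, q, by exact_mod_cast hpq.le, hgp, hpt, hgq⟩

lemma FRel_equiv (hcoc : Hcoc π) (hreg : Hreg π) {s t : ℝ} (hst : s < t) :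
    Equivalence (FRel π s t) := by
  constructor
  · intro a
    obtain ⟨p, q, hpq, h1, h2, h3⟩ := good_pair_exists π hreg hst (max a a + 1)
    exact ⟨p, q, hpq, h1, h2, h3, (π p q hpq).refl a⟩
  · rintro a b ⟨p, q, hpq, h1, h2, h3, h4⟩
    refine ⟨p, q, hpq, ?_, h2, ?_, (π p q hpq).symm h4⟩
    · rw [Nat.max_comm b a]; exact h1
    · rw [Nat.max_comm b a]; exact h3
  · intro a b c hab hbc
    obtain ⟨p, q, hpq, h1, h2, h3⟩ := good_pair_exists π hreg hst (max a (max b c) + 1)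
    have hab' := (FRel_iff π hcoc hpq (good_mono π h1 (by omega)) h2
      (good_mono π h3 (by omega))).mp hab
    have hbc' := (FRel_iff π hcoc hpq (good_mono π h1 (by omega)) h2
      (good_mono π h3 (by omega))).mp hbc
    exact (FRel_iff π hcoc hpq (good_mono π h1 (by omega)) h2
      (good_mono π h3 (by omega))).mpr ((π p q hpq).trans hab' hbc')

/-- The extension of the flow to real times. -/
noncomputable def flowExt (hcoc : Hcoc π) (hreg : Hreg π) : ℝ → ℝ → Setoid ℕ :=
  fun s t => if h : s < t then ⟨FRel π s t, FRel_equiv π hcoc hreg h⟩ else eqSetoid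

variable (hcoc : Hcoc π) (hreg : Hreg π)

lemma flowExt_rel {s t : ℝ} (h : s < t) (a b : ℕ) :
    (flowExt π hcoc hreg s t).r a b ↔ FRel π s t a b := by
  unfold flowExt
  rw [dif_pos h]
  exact Iff.rfl

lemma flowExt_diag (s : ℝ) : flowExt π hcoc hreg s s = eqSetoid := by
  unfold flowExt
  rw [dif_neg (lt_irrefl s)]

end Flow

section Main

variable (π : ∀ p q : ℚ, p ≤ q → Setoid ℕ) (hcoc : Hcoc π) (hreg : Hreg π)

lemma flowExt_cocycle {r s t : ℝ} (h1 : r < s) (h2 : s < t) :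
    flowExt π hcoc hreg r t =
      Coag (flowExt π hcoc hreg s t) (flowExt π hcoc hreg r s) := by
  apply Setoid.ext
  intro a b
  obtain ⟨q₂, hgq₂, hq₂t⟩ := good_exists π hreg s (max a b + 1) h2
  obtain ⟨p, hgp, hps⟩ := good_exists π hreg r (max a b + 1) h1
  obtain ⟨q, hgq, -⟩ := good_exists π hreg t (max a b + 1) (lt_add_one t)
  have hsq₂ : s ≤ (q₂ : ℝ) := hgq₂.1
  have htq : t ≤ (q : ℝ) := hgq.1
  have hpq₂ : p < q₂ := by exact_mod_cast hps.trans_le hsq₂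
  have hq₂q : q₂ < q := by exact_mod_cast hq₂t.trans_le htq
  have hpq : p < q := hpq₂.trans hq₂q
  have hL : (flowExt π hcoc hreg r t).r a b ↔ (π p q hpq.le).r a b := by
    rw [flowExt_rel π hcoc hreg (h1.trans h2)]
    exact FRel_iff π hcoc hpq.le hgp (hps.trans h2) hgq
  have hAgA : AgreeOn (flowExt π hcoc hreg s t) (π q₂ q hq₂q.le) (a + 1) := by
    intro i j hi hj
    rw [flowExt_rel π hcoc hreg h2]
    exact FRel_iff π hcoc hq₂q.le (good_mono π hgq₂ (by omega)) hq₂t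
      (good_mono π hgq (by omega))
  have hAgB : AgreeOn (flowExt π hcoc hreg s t) (π q₂ q hq₂q.le) (b + 1) := by
    intro i j hi hj
    rw [flowExt_rel π hcoc hreg h2]
    exact FRel_iff π hcoc hq₂q.le (good_mono π hgq₂ (by omega)) hq₂t
      (good_mono π hgq (by omega))
  have hA : blockIdx (flowExt π hcoc hreg s t) a = blockIdx (π q₂ q hq₂q.le) a :=
    blockIdx_congr hAgA (by omega)
  have hB : blockIdx (flowExt π hcoc hreg s t) b = blockIdx (π q₂ q hq₂q.le) b :=
    blockIdx_congr hAgB (by omega)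
  have hAle : blockIdx (π q₂ q hq₂q.le) a ≤ a := blockIdx_le _ a
  have hBle : blockIdx (π q₂ q hq₂q.le) b ≤ b := blockIdx_le _ b
  have hR : (Coag (flowExt π hcoc hreg s t) (flowExt π hcoc hreg r s)).r a b ↔
      (π p q₂ hpq₂.le).r (blockIdx (π q₂ q hq₂q.le) a) (blockIdx (π q₂ q hq₂q.le) b) := by
    rw [Coag_rel, hA, hB, flowExt_rel π hcoc hreg h1]
    exact FRel_iff π hcoc hpq₂.le (good_mono π hgp (by omega)) hps
      (good_mono π hgq₂ (by omega))
  rw [hL, hR, hcoc p q₂ q hpq₂ hq₂q]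
  exact Coag_rel _ _ a b

lemma flowExt_right (s : ℝ) (n : ℕ) :
    ∃ ε > 0, ∀ (t : ℝ), s ≤ t → t < s + ε →
      restTrivial (flowExt π hcoc hreg s t) n := by
  obtain ⟨ε, hε, hr, -⟩ := hreg s n
  refine ⟨ε, hε, fun t h ht => ?_⟩
  rcases eq_or_lt_of_le h with rfl | hst
  · rw [flowExt_diag]
    intro i _ j _ hij
    exact hij
  · intro i hi j hj hij
    rw [flowExt_rel π hcoc hreg hst] at hij
    obtain ⟨p, hgp, hpt⟩ := good_exists π hreg s n hst
    obtain ⟨q', hgq', hq'⟩ := good_exists π hreg t n ht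
    have hpq' : p < q' := by exact_mod_cast hpt.trans_le hgq'.1
    have hrel := (FRel_iff π hcoc hpq'.le (good_mono π hgp (by omega)) hpt
      (good_mono π hgq' (by omega))).mp hij
    exact hr p q' hpq'.le hgp.1 hq' i hi j hj hrel

lemma flowExt_left (s : ℝ) (n : ℕ) :
    ∃ ε > 0, ∀ r : ℝ, s - ε < r → r < s →
      ∃ δ > 0, δ < s - r ∧ ∀ (t : ℝ), r ≤ t → s - δ < t → t < s →
        restTrivial (flowExt π hcoc hreg r t) n := by
  obtain ⟨ε, hε, -, hl⟩ := hreg s n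
  refine ⟨ε, hε, fun r hr1 hr2 =>
    ⟨(s - r) / 2, by linarith, by linarith, fun t h ht1 ht2 => ?_⟩⟩
  have hrt : r < t := by linarith
  intro i hi j hj hij
  rw [flowExt_rel π hcoc hreg hrt] at hij
  obtain ⟨p, hgp, hpt⟩ := good_exists π hreg r n hrt
  obtain ⟨q', hgq', hq's⟩ := good_exists π hreg t n ht2
  have hpq' : p < q' := by exact_mod_cast hpt.trans_le hgq'.1
  have hrel := (FRel_iff π hcoc hpq'.le (good_mono π hgp (by omega)) hpt
    (good_mono π hgq' (by omega))).mp hij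
  exact hl p q' hpq'.le (by linarith [hgp.1]) hq's i hi j hj hrel

lemma flowExt_rat (p q : ℚ) (h : p < q) :
    flowExt π hcoc hreg (p : ℝ) (q : ℝ) = π p q h.le := by
  have hst : (p : ℝ) < (q : ℝ) := by exact_mod_cast h
  apply Setoid.ext
  intro a b
  rw [flowExt_rel π hcoc hreg hst]
  exact FRel_iff π hcoc h.le (good_self π hreg p _) hst (good_self π hreg q _)

end Main

/-- regularisation: extension of a rationally-indexed flow to a
deterministic flow of partitions.  If a family of partitions indexed by pairs
of rationals `p ≤ q` satisfies the cocycle property on rationals, and mergers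
do not accumulate near any real time (from the right or from the left), then it
extends to a deterministic flow of partitions indexed by reals. -/
theorem stmt3 (π : ∀ p q : ℚ, p ≤ q → Setoid ℕ)
    (hcoc : ∀ (p q r : ℚ) (h₁ : p < q) (h₂ : q < r),
      π p r (h₁.le.trans h₂.le) = Coag (π q r h₂.le) (π p q h₁.le))
    (hreg : ∀ (s : ℝ) (n : ℕ), ∃ ε > 0,
      (∀ (p q : ℚ) (h : p ≤ q), s ≤ (p : ℝ) → (q : ℝ) < s + ε → restTrivial (π p q h) n) ∧
      (∀ (p q : ℚ) (h : p ≤ q), s - ε < (p : ℝ) → (q : ℝ) < s → restTrivial (π p q h) n)) :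
    ∃ πt : ∀ s t : ℝ, s ≤ t → Setoid ℕ, IsDetFlow πt ∧
      ∀ (p q : ℚ) (h : p < q), πt (p : ℝ) (q : ℝ) (by exact_mod_cast h.le) = π p q h.le := by
  have hcoc' : Hcoc π := hcoc
  have hreg' : Hreg π := hreg
  refine ⟨fun s t _ => flowExt π hcoc' hreg' s t, ⟨?_, ?_, ?_, ?_⟩, ?_⟩
  · exact fun r s t h1 h2 => flowExt_cocycle π hcoc' hreg' h1 h2
  · exact fun s => flowExt_diag π hcoc' hreg' s
  · intro s n
    obtain ⟨ε, hε, hp⟩ := flowExt_right π hcoc' hreg' s n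
    exact ⟨ε, hε, fun t h ht => hp t h ht⟩
  · intro s n
    obtain ⟨ε, hε, hp⟩ := flowExt_left π hcoc' hreg' s n
    refine ⟨ε, hε, fun r h1 h2 => ?_⟩
    obtain ⟨δ, hδ, hδ', hq⟩ := hp r h1 h2
    exact ⟨δ, hδ, hδ', fun t h ht1 ht2 => hq t h ht1 ht2⟩
  · exact fun p q h => flowExt_rat π hcoc' hreg' p q h
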